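/- (Abstract localized potentials / range non-inclusion.) Let X, Y₁, Y₂ be Hilbert spaces and A : Y₁ → X, B : Y₂ → X bounded linear operators. If the range of A is not contained in the range of B, then there exists a sequence (g_n) in X such that ‖A* g_n‖ → ∞ and ‖B* g_n‖ → 0, where A*, B* denote the Hilbert adjoints. -/

import Mathlib

/-!
If `‖A† x‖ ≤ C ‖B† x‖` for all `x`, then for each `y` the functional `B† x ↦ ⟪A y, x⟫` is well
defined and bounded on the range of `B†`; extending it by Hahn–Banach and representing it by Riesz
gives `z` with `B z = A y`. So if `R(A) ⊄ R(B)`, no such `C` exists: there are `x` with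
`(n + 1)² ‖B† x‖ < ‖A† x‖`, and rescaling them so that `‖A† x‖ = n + 1` forces `‖B† x‖ < 1 / (n + 1)`.
-/

open Filter Topology ContinuousLinearMap

theorem LinearMap.exists_strongDual_comp_eq_of_norm_le {𝕜 E F : Type*} [RCLike 𝕜]
    [AddCommGroup E] [Module 𝕜 E] [NormedAddCommGroup F] [NormedSpace 𝕜 F]
    (T : E →ₗ[𝕜] F) (f : E →ₗ[𝕜] 𝕜) (C : ℝ) (hf : ∀ x, ‖f x‖ ≤ C * ‖T x‖) :
    ∃ g : StrongDual 𝕜 F, ∀ x, g (T x) = f x := by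
  have hker : ker T ≤ ker f := fun x hx => by
    simpa [mem_ker.mp hx] using hf x
  let φ : range T →ₗ[𝕜] 𝕜 := (ker T).liftQ f hker ∘ₗ T.quotKerEquivRange.symm.toLinearMap
  have hφ : ∀ x, φ ⟨T x, mem_range_self T x⟩ = f x := fun x => by simp [φ]
  have hbound : ∀ s, ‖φ s‖ ≤ C * ‖s‖ := by
    rintro ⟨_, x, rfl⟩
    rw [hφ]
    exact hf x
  obtain ⟨g, hg, -⟩ := exists_extension_norm_eq _ (φ.mkContinuous C hbound)
  exact ⟨g, fun x => (hg ⟨T x, mem_range_self T x⟩).trans (hφ x)⟩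

theorem ContinuousLinearMap.range_subset_range_of_norm_adjoint_le {𝕜 X Y₁ Y₂ : Type*} [RCLike 𝕜]
    [NormedAddCommGroup X] [InnerProductSpace 𝕜 X] [CompleteSpace X]
    [NormedAddCommGroup Y₁] [InnerProductSpace 𝕜 Y₁] [CompleteSpace Y₁]
    [NormedAddCommGroup Y₂] [InnerProductSpace 𝕜 Y₂] [CompleteSpace Y₂]
    (A : Y₁ →L[𝕜] X) (B : Y₂ →L[𝕜] X) (C : ℝ) (hC : ∀ x, ‖adjoint A x‖ ≤ C * ‖adjoint B x‖) :
    Set.range A ⊆ Set.range B := by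
  rintro _ ⟨y, rfl⟩
  have hbound : ∀ x, ‖innerSL 𝕜 (A y) x‖ ≤ (‖y‖ * C) * ‖adjoint B x‖ := fun x => by
    rw [innerSL_apply_apply, ← adjoint_inner_right, mul_assoc]
    calc ‖inner 𝕜 y (adjoint A x)‖ ≤ ‖y‖ * ‖adjoint A x‖ := norm_inner_le_norm _ _
      _ ≤ ‖y‖ * (C * ‖adjoint B x‖) := by gcongr; exact hC x
  obtain ⟨g, hg⟩ := (adjoint B).toLinearMap.exists_strongDual_comp_eq_of_norm_le
    (innerSL 𝕜 (A y)).toLinearMap _ hbound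
  refine ⟨(InnerProductSpace.toDual 𝕜 Y₂).symm g, ext_inner_right 𝕜 fun x => ?_⟩
  rw [← adjoint_inner_right, InnerProductSpace.toDual_symm_apply]
  exact hg x

theorem exists_seq_tendsto_norm_atTop_and_norm_tendsto_zero {E F G : Type*}
    [AddCommGroup E] [Module ℝ E] [SeminormedAddCommGroup F] [NormedSpace ℝ F]
    [SeminormedAddCommGroup G] [NormedSpace ℝ G] (S : E →ₗ[ℝ] F) (T : E →ₗ[ℝ] G)
    (h : ∀ C : ℝ, ∃ x, C * ‖T x‖ < ‖S x‖) :
    ∃ g : ℕ → E, Tendsto (fun n => ‖S (g n)‖) atTop atTop ∧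
      Tendsto (fun n => ‖T (g n)‖) atTop (𝓝 0) := by
  choose x hx using fun n : ℕ => h (((n : ℝ) + 1) ^ 2)
  have hSx : ∀ n, 0 < ‖S (x n)‖ := fun n => (by positivity : (0 : ℝ) ≤ _).trans_lt (hx n)
  let g : ℕ → E := fun n => (((n : ℝ) + 1) / ‖S (x n)‖) • x n
  have hSg : ∀ n, ‖S (g n)‖ = n + 1 := fun n => by
    simp only [g, map_smul, norm_smul, norm_div, Real.norm_eq_abs, abs_norm]
    rw [abs_of_nonneg (by positivity), div_mul_cancel₀ _ (hSx n).ne']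
  have hTg : ∀ n, ‖T (g n)‖ ≤ 1 / ((n : ℝ) + 1) := fun n => by
    simp only [g, map_smul, norm_smul, norm_div, Real.norm_eq_abs, abs_norm]
    rw [abs_of_nonneg (by positivity), div_mul_eq_mul_div, div_le_div_iff₀ (hSx n) (by positivity)]
    nlinarith [hx n]
  refine ⟨g, ?_, ?_⟩
  · simp_rw [hSg]
    exact tendsto_atTop_add_const_right _ 1 tendsto_natCast_atTop_atTop
  · exact squeeze_zero (fun n => norm_nonneg _) hTg tendsto_one_div_add_atTop_nhds_zero_nat

theorem stmt_13 {X Y₁ Y₂ : Type*}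
    [NormedAddCommGroup X] [InnerProductSpace ℝ X] [CompleteSpace X]
    [NormedAddCommGroup Y₁] [InnerProductSpace ℝ Y₁] [CompleteSpace Y₁]
    [NormedAddCommGroup Y₂] [InnerProductSpace ℝ Y₂] [CompleteSpace Y₂]
    (A : Y₁ →L[ℝ] X) (B : Y₂ →L[ℝ] X)
    (hrange : ¬ (Set.range A ⊆ Set.range B)) :
    ∃ g : ℕ → X,
      Tendsto (fun n => ‖ContinuousLinearMap.adjoint A (g n)‖) atTop atTop ∧
      Tendsto (fun n => ‖ContinuousLinearMap.adjoint B (g n)‖) atTop (𝓝 0) := by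
  have hunbounded : ∀ C : ℝ, ∃ x, C * ‖adjoint B x‖ < ‖adjoint A x‖ := fun C => by
    by_contra! hC
    exact hrange (range_subset_range_of_norm_adjoint_le A B C hC)
  exact exists_seq_tendsto_norm_atTop_and_norm_tendsto_zero
    (adjoint A).toLinearMap (adjoint B).toLinearMap hunbounded
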